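/- Let f₁ and f₂ be commutative fix-actions, let s be a network state, and let α and β be finite fix-action sequences such that the concatenated sequence α ∘ ⟨f₂, f₁⟩ ∘ β is applicable to s. Then the sequence α ∘ ⟨f₁, f₂⟩ ∘ β is also applicable to s, has the same total cost, and yields the same resulting state: s[α ∘ ⟨f₂, f₁⟩ ∘ β] = s[α ∘ ⟨f₁, f₂⟩ ∘ β]. -/

import Mathlib

/-- A fix-action over network propositions `P`: precondition and postcondition
are finite sets of literals (a literal is a pair of a proposition and a
polarity, `true` for a positive and `false` for a negative occurrence),
containing at most one literal per proposition, together with a strictly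
positive real cost. -/
structure FixAction (P : Type*) where
  pre : Finset (P × Bool)
  post : Finset (P × Bool)
  cost : ℝ
  cost_pos : 0 < cost
  pre_unique : ∀ (p : P) (b b' : Bool), (p, b) ∈ pre → (p, b') ∈ pre → b = b'
  post_unique : ∀ (p : P) (b b' : Bool), (p, b) ∈ post → (p, b') ∈ post → b = b'

variable {P : Type*} [DecidableEq P]

/-- A network state `s` satisfies a literal `(p, true)` iff `p ∈ s`,
and satisfies `(p, false)` iff `p ∉ s`. -/
def satLit (s : Finset P) (l : P × Bool) : Prop :=
  (l.1 ∈ s) ↔ l.2 = true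

/-- A fix-action is applicable to a state if the state satisfies every
literal of its precondition. -/
def FixAction.applicable (f : FixAction P) (s : Finset P) : Prop :=
  ∀ l ∈ f.pre, satLit s l

/-- The result `s[f]` of applying a fix-action: every proposition occurring
positively in `post f`, together with every proposition of `s` whose
negation does not occur in `post f`. -/
def FixAction.applyTo (f : FixAction P) (s : Finset P) : Finset P :=
  (f.post.filter (fun l => l.2 = true)).image Prod.fst ∪
    s.filter (fun p => (p, false) ∉ f.post)

/-- Applicability of a finite sequence of fix-actions to a state. -/
def seqApplicable (s : Finset P) : List (FixAction P) → Prop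
  | [] => True
  | f :: σ => f.applicable s ∧ seqApplicable (f.applyTo s) σ

/-- The result `s[σ]` of applying a sequence of fix-actions. -/
def seqApply (s : Finset P) : List (FixAction P) → Finset P
  | [] => s
  | f :: σ => seqApply (f.applyTo s) σ

/-- The cost of a sequence of fix-actions: the sum of the costs of its
elements. -/
noncomputable def seqCost (σ : List (FixAction P)) : ℝ :=
  (σ.map FixAction.cost).sum

/-- `f₁` disables `f₂` if some literal in `post f₁` is the negation of a
literal in `pre f₂`. -/
def disablesFix (f₁ f₂ : FixAction P) : Prop :=
  ∃ (p : P) (b : Bool), (p, b) ∈ f₁.post ∧ (p, !b) ∈ f₂.pre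

/-- `f₁` and `f₂` conflict if some literal in `post f₁` is the negation of a
literal in `post f₂`. -/
def conflictFix (f₁ f₂ : FixAction P) : Prop :=
  ∃ (p : P) (b : Bool), (p, b) ∈ f₁.post ∧ (p, !b) ∈ f₂.post

/-- `f₁` and `f₂` interfere if they conflict or either disables the other. -/
def interfereFix (f₁ f₂ : FixAction P) : Prop :=
  conflictFix f₁ f₂ ∨ disablesFix f₁ f₂ ∨ disablesFix f₂ f₁

/-- `f₁` enables `f₂` if some literal of `post f₁` belongs to `pre f₂` or
some literal of `post f₂` belongs to `pre f₁`. -/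
def enablesFix (f₁ f₂ : FixAction P) : Prop :=
  (∃ l ∈ f₁.post, l ∈ f₂.pre) ∨ (∃ l ∈ f₂.post, l ∈ f₁.pre)

/-- `f₁` and `f₂` are commutative if they do not interfere and neither
enables the other. -/
def commutativeFix (f₁ f₂ : FixAction P) : Prop :=
  ¬ interfereFix f₁ f₂ ∧ ¬ enablesFix f₁ f₂

/-
Two commutative fix-actions touch disjoint sets of propositions as far as it matters: neither
postcondition mentions a proposition of the other's precondition (a literal of the same sign
would be an enabling, one of the opposite sign a disabling), and the postconditions do not
contradict each other. Hence applying one action leaves the other's applicability unchanged, and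
the two orders of application produce the same state. Applicability and results of sequences
compose along concatenation, so the swap inside `α` and `β` reduces to the swap of the pair.
-/

namespace FixAction

theorem mem_applyTo {f : FixAction P} {s : Finset P} {p : P} :
    p ∈ f.applyTo s ↔ (p, true) ∈ f.post ∨ p ∈ s ∧ (p, false) ∉ f.post := by
  simp [applyTo]

theorem mem_applyTo_iff_of_forall_notMem_post {f : FixAction P} {s : Finset P} {p : P}
    (h : ∀ b, (p, b) ∉ f.post) : p ∈ f.applyTo s ↔ p ∈ s := by
  simp [mem_applyTo, h]

theorem applicable_applyTo_iff {f g : FixAction P} {s : Finset P}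
    (h : ∀ p b, (p, b) ∈ f.pre → ∀ b', (p, b') ∉ g.post) :
    f.applicable (g.applyTo s) ↔ f.applicable s :=
  forall₂_congr fun l hl => by
    rw [satLit, satLit, mem_applyTo_iff_of_forall_notMem_post (h l.1 l.2 hl)]

theorem applyTo_comm {f g : FixAction P} {s : Finset P} (h : ¬ conflictFix f g) :
    f.applyTo (g.applyTo s) = g.applyTo (f.applyTo s) := by
  ext p
  have htf : ¬ ((p, true) ∈ f.post ∧ (p, false) ∈ g.post) := fun ⟨hf, hg⟩ => h ⟨p, true, hf, hg⟩
  have hft : ¬ ((p, false) ∈ f.post ∧ (p, true) ∈ g.post) := fun ⟨hf, hg⟩ => h ⟨p, false, hf, hg⟩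
  simp only [mem_applyTo]
  tauto

end FixAction

namespace commutativeFix

omit [DecidableEq P] in
theorem symm {f₁ f₂ : FixAction P} (h : commutativeFix f₁ f₂) : commutativeFix f₂ f₁ := by
  obtain ⟨hni, hne⟩ := h
  refine ⟨?_, fun he => hne he.symm⟩
  rintro (⟨p, b, h₂, h₁⟩ | hd | hd)
  · exact hni (Or.inl ⟨p, !b, h₁, by rwa [Bool.not_not]⟩)
  · exact hni (Or.inr (Or.inr hd))
  · exact hni (Or.inr (Or.inl hd))

omit [DecidableEq P] in
theorem notMem_post_of_mem_pre {f₁ f₂ : FixAction P} (h : commutativeFix f₁ f₂) {p : P}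
    {b : Bool} (hpre : (p, b) ∈ f₁.pre) (b' : Bool) : (p, b') ∉ f₂.post := by
  intro hpost
  obtain rfl | rfl := b'.eq_or_eq_not b
  · exact h.2 (Or.inr ⟨_, hpost, hpre⟩)
  · exact h.1 (Or.inr (Or.inr ⟨p, !b, hpost, by rwa [Bool.not_not]⟩))

theorem applicable_applyTo_iff {f₁ f₂ : FixAction P} (h : commutativeFix f₁ f₂)
    {s : Finset P} : f₁.applicable (f₂.applyTo s) ↔ f₁.applicable s :=
  FixAction.applicable_applyTo_iff fun _ _ hp => h.notMem_post_of_mem_pre hp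

end commutativeFix

theorem seqApplicable_append {s : Finset P} {α β : List (FixAction P)} :
    seqApplicable s (α ++ β) ↔ seqApplicable s α ∧ seqApplicable (seqApply s α) β := by
  induction α generalizing s with
  | nil => simp [seqApplicable, seqApply]
  | cons f α ih => simp only [List.cons_append, seqApplicable, seqApply, ih, and_assoc]

theorem seqApply_append {s : Finset P} {α β : List (FixAction P)} :
    seqApply s (α ++ β) = seqApply (seqApply s α) β := by
  induction α generalizing s with
  | nil => rfl
  | cons f α ih => exact ih

omit [DecidableEq P] in
theorem seqCost_perm {σ τ : List (FixAction P)} (h : σ.Perm τ) : seqCost σ = seqCost τ :=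
  (h.map _).sum_eq

/-- If `f₁` and `f₂` are commutative fix-actions and `α ++ [f₂, f₁] ++ β` is
applicable to `s`, then `α ++ [f₁, f₂] ++ β` is also applicable to `s`, has
the same total cost, and yields the same resulting state. -/
theorem commutative_fix_actions_swap_in_context
    {P : Type*} [DecidableEq P]
    (f₁ f₂ : FixAction P) (hcomm : commutativeFix f₁ f₂)
    (s : Finset P) (α β : List (FixAction P))
    (happ : seqApplicable s (α ++ [f₂, f₁] ++ β)) :
    seqApplicable s (α ++ [f₁, f₂] ++ β) ∧
    seqCost (α ++ [f₁, f₂] ++ β) = seqCost (α ++ [f₂, f₁] ++ β) ∧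
    seqApply s (α ++ [f₂, f₁] ++ β) = seqApply s (α ++ [f₁, f₂] ++ β) := by
  simp only [seqApplicable_append, seqApply_append, seqApplicable, seqApply] at happ ⊢
  obtain ⟨⟨hα, h₂, h₁, -⟩, hβ⟩ := happ
  have hswap : f₁.applyTo (f₂.applyTo (seqApply s α)) = f₂.applyTo (f₁.applyTo (seqApply s α)) :=
    FixAction.applyTo_comm fun hc => hcomm.1 (Or.inl hc)
  have h₁' := hcomm.applicable_applyTo_iff.1 h₁
  have h₂' := hcomm.symm.applicable_applyTo_iff.2 h₂
  exact ⟨⟨⟨hα, h₁', h₂', trivial⟩, hswap ▸ hβ⟩,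
    seqCost_perm ((List.Perm.swap f₂ f₁ []).append_left α |>.append_right β), by rw [hswap]⟩
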